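/- Let X be a characteristic subspace for a nilpotent f, and suppose in the exponent decomposition V = ⟨U_{a_1}⟩ ⊕ ⋯ ⊕ ⟨U_{a_m}⟩ we have X ∩ ⟨U_{a_i}⟩ = f^{c_i}⟨U_{a_i}⟩ for each i. Then for i < j: c_i ≤ c_j and a_i − c_i ≤ a_j − c_j. -/

import Mathlib

/-!
For `a < b` pick generators `u p`, `u q` of exponents `a`, `b`. A square-zero `g` commuting with `f`
yields the automorphism `1 + g` commuting with `f`, so a characteristic `X` is `g`-stable. Sending
the chain of `u q` onto the chain of `u p` (possible as `a < b`) maps `f ^ c_b (u q) ∈ X` to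
`f ^ c_b (u p)`, which lies in `X ∩ ⟨U_a⟩ = f ^ c_a ⟨U_a⟩` only if `c_a ≤ c_b`. Sending the chain
of `u p` into the chain of `u q`, shifted by `b - a`, maps `f ^ c_a (u p)` to
`f ^ (c_a + b - a) (u q)`, which forces `c_b ≤ c_a + b - a`.
-/

open LinearMap

variable {K : Type*} [Field K] {V : Type*} [AddCommGroup V] [Module K V]

/-- `X` is hyperinvariant for `f`: invariant under every endomorphism commuting with `f`. -/
def Hinv (f : V →ₗ[K] V) (X : Submodule K V) : Prop :=
  ∀ g : V →ₗ[K] V, g ∘ₗ f = f ∘ₗ g → X.map g ≤ X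

/-- `X` is characteristic for `f`: `f`-invariant and fixed by every automorphism commuting with `f`. -/
def Chinv (f : V →ₗ[K] V) (X : Submodule K V) : Prop :=
  X.map f ≤ X ∧
    ∀ α : V ≃ₗ[K] V, (α : V →ₗ[K] V) ∘ₗ f = f ∘ₗ (α : V →ₗ[K] V) →
      X.map (α : V →ₗ[K] V) = X

/-- The cyclic subspace generated by `x`. -/
def cyc (f : V →ₗ[K] V) (x : V) : Submodule K V :=
  Submodule.span K (Set.range fun i : ℕ => (f ^ i) x)

/-- `x` has exponent `ℓ`. -/
def ExpEq (f : V →ₗ[K] V) (x : V) (ℓ : ℕ) : Prop :=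
  (f ^ ℓ) x = 0 ∧ ∀ j < ℓ, (f ^ j) x ≠ 0

/-- `x` has height `q`. -/
def HeightEq (f : V →ₗ[K] V) (x : V) (q : ℕ) : Prop :=
  x ∈ LinearMap.range (f ^ q) ∧ x ∉ LinearMap.range (f ^ (q + 1))

/-- The `r`-th Ulm invariant: number of Jordan blocks of size `r` (for `r ≥ 1`). -/
noncomputable def ulm (f : V →ₗ[K] V) (r : ℕ) : ℕ :=
  Module.finrank K ↥(LinearMap.ker f ⊓ LinearMap.range (f ^ (r - 1))) -
    Module.finrank K ↥(LinearMap.ker f ⊓ LinearMap.range (f ^ r))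

/-- `u` is a generator tuple with exponents `t`. -/
def IsGenTuple {k : ℕ} (f : V →ₗ[K] V) (u : Fin k → V) (t : Fin k → ℕ) : Prop :=
  (∀ i, ExpEq f (u i) (t i)) ∧ DirectSum.IsInternal (fun i => cyc f (u i))

/-- The summand `⟨U_a⟩` of all cyclic subspaces whose generator has exponent `a`. -/
def subU {k : ℕ} (f : V →ₗ[K] V) (u : Fin k → V) (t : Fin k → ℕ) (a : ℕ) : Submodule K V :=
  ⨆ i ∈ {i : Fin k | t i = a}, cyc f (u i)

section Cyclic

variable {f : V →ₗ[K] V} {x : V} {a : ℕ}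

lemma pow_apply_mem_cyc (f : V →ₗ[K] V) (x : V) (m : ℕ) : (f ^ m) x ∈ cyc f x :=
  Submodule.subset_span ⟨m, rfl⟩

lemma cyc_le_ker_pow (h : (f ^ a) x = 0) : cyc f x ≤ ker (f ^ a) := by
  refine Submodule.span_le.2 ?_
  rintro _ ⟨m, rfl⟩
  change (f ^ a) ((f ^ m) x) = 0
  rw [← Module.End.mul_apply, ← pow_add, add_comm, pow_add, Module.End.mul_apply, h, map_zero]

lemma span_range_pow_apply_fin_le_cyc :
    Submodule.span K (Set.range fun m : Fin a => (f ^ (m : ℕ)) x) ≤ cyc f x :=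
  Submodule.span_le.2 <| Set.range_subset_iff.2 fun m => pow_apply_mem_cyc f x m

lemma cyc_le_span_range_pow_apply_fin (h : (f ^ a) x = 0) :
    cyc f x ≤ Submodule.span K (Set.range fun m : Fin a => (f ^ (m : ℕ)) x) := by
  refine Submodule.span_le.2 <| Set.range_subset_iff.2 fun m => ?_
  rcases lt_or_ge m a with hm | hm
  · exact Submodule.subset_span ⟨⟨m, hm⟩, rfl⟩
  · simp [Module.End.pow_map_zero_of_le hm h]

lemma ExpEq.of_succ (h : ExpEq f x (a + 1)) : ExpEq f (f x) a := by
  refine ⟨?_, fun j hj => ?_⟩ <;> rw [← Module.End.mul_apply, ← pow_succ]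
  exacts [h.1, h.2 (j + 1) (by omega)]

lemma ExpEq.linearIndependent (h : ExpEq f x a) :
    LinearIndependent K fun m : Fin a => (f ^ (m : ℕ)) x := by
  induction a generalizing x with
  | zero => exact linearIndependent_empty_type
  | succ a ih =>
    have hcons : (fun m : Fin (a + 1) => (f ^ (m : ℕ)) x) =
        Fin.cons x fun m : Fin a => (f ^ (m : ℕ)) (f x) := by
      funext m
      refine Fin.cases ?_ (fun m => ?_) m
      · simp
      · simp [pow_succ]
    rw [hcons, linearIndependent_finCons]
    exact ⟨ih h.of_succ, fun hx => h.2 a a.lt_succ_self <|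
      cyc_le_ker_pow h.of_succ.1 (span_range_pow_apply_fin_le_cyc hx)⟩

noncomputable def ExpEq.cycBasis (h : ExpEq f x a) : Module.Basis (Fin a) K (cyc f x) :=
  (Module.Basis.span h.linearIndependent).map <| LinearEquiv.ofEq _ _ <|
    le_antisymm span_range_pow_apply_fin_le_cyc (cyc_le_span_range_pow_apply_fin h.1)

@[simp] lemma ExpEq.cycBasis_apply (h : ExpEq f x a) (m : Fin a) :
    (h.cycBasis m : V) = (f ^ (m : ℕ)) x := by
  simp [ExpEq.cycBasis, Module.Basis.span_apply]

end Cyclic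

namespace IsGenTuple

variable {k : ℕ} {f : V →ₗ[K] V} {u : Fin k → V} {t : Fin k → ℕ}

noncomputable def basis (hu : IsGenTuple f u t) : Module.Basis (Σ l, Fin (t l)) K V :=
  hu.2.collectedBasis fun l => (hu.1 l).cycBasis

lemma basis_apply (hu : IsGenTuple f u t) (j : Σ l, Fin (t l)) :
    hu.basis j = (f ^ (j.2 : ℕ)) (u j.1) := by
  simp [basis, DirectSum.IsInternal.collectedBasis_coe]

lemma subU_le_ker_pow (hu : IsGenTuple f u t) (a : ℕ) : subU f u t a ≤ ker (f ^ a) :=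
  iSup₂_le fun l (hl : t l = a) => cyc_le_ker_pow (hl ▸ (hu.1 l).1)

lemma exists_commute_shift (hu : IsGenTuple f u t) {p q : Fin k} (hpq : p ≠ q) {s : ℕ}
    (hs : (f ^ (t p + s)) (u q) = 0) :
    ∃ g : V →ₗ[K] V, Commute g f ∧ g * g = 0 ∧ ∀ n, g ((f ^ n) (u p)) = (f ^ (n + s)) (u q) := by
  classical
  let g : V →ₗ[K] V := hu.basis.constr K fun j => if j.1 = p then (f ^ ((j.2 : ℕ) + s)) (u q) else 0
  have hg : ∀ l n, g ((f ^ n) (u l)) = if l = p then (f ^ (n + s)) (u q) else 0 := by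
    intro l n
    rcases lt_or_ge n (t l) with hn | hn
    · rw [← hu.basis_apply ⟨l, n, hn⟩]
      exact hu.basis.constr_basis K _ _
    · rw [Module.End.pow_map_zero_of_le hn (hu.1 l).1, map_zero]
      split_ifs with hl
      · subst hl
        exact (Module.End.pow_map_zero_of_le (by omega) hs).symm
      · rfl
  refine ⟨g, hu.basis.ext fun j => ?_, hu.basis.ext fun j => ?_, fun n => by simp [hg]⟩
  · have hsucc : ∀ n v, f ((f ^ n) v) = (f ^ (n + 1)) v := fun n v => by
      rw [pow_succ', Module.End.mul_apply]
    rw [Module.End.mul_apply, Module.End.mul_apply, hu.basis_apply, hsucc, hg, hg, apply_ite f,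
      map_zero, hsucc, Nat.add_right_comm]
  · rw [Module.End.mul_apply, LinearMap.zero_apply, hu.basis_apply, hg]
    split_ifs
    · rw [hg, if_neg hpq.symm]
    · exact map_zero g

end IsGenTuple

namespace Chinv

variable {f : V →ₗ[K] V} {X : Submodule K V}

lemma apply_mem_of_mul_self_eq_zero (hX : Chinv f X) {g : V →ₗ[K] V} (hgf : Commute g f)
    (hg : g * g = 0) {x : V} (hx : x ∈ X) : g x ∈ X := by
  have hunit : IsUnit (1 + g) := IsNilpotent.isUnit_one_add ⟨2, by rw [sq, hg]⟩
  let α : V ≃ₗ[K] V := LinearMap.GeneralLinearGroup.generalLinearEquiv K V hunit.unit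
  have hαg : (α : V →ₗ[K] V) = 1 + g := by simp [α]
  have hα : (α : V →ₗ[K] V) ∘ₗ f = f ∘ₗ α := by
    rw [hαg, ← Module.End.mul_eq_comp, ← Module.End.mul_eq_comp, add_mul, mul_add, one_mul,
      mul_one, hgf.eq]
  have hαx : x + g x ∈ X := by
    simpa [hαg] using hX.2 α hα ▸ Submodule.mem_map_of_mem hx
  simpa using X.sub_mem hαx hx

variable {k : ℕ} {u : Fin k → V} {t : Fin k → ℕ}

lemma pow_apply_mem_of_shift (hX : Chinv f X) (hu : IsGenTuple f u t) {p q : Fin k} (hpq : p ≠ q)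
    {s : ℕ} (hs : (f ^ (t p + s)) (u q) = 0) {n : ℕ} (hn : (f ^ n) (u p) ∈ X) :
    (f ^ (n + s)) (u q) ∈ X := by
  obtain ⟨g, hgf, hg, hgu⟩ := hu.exists_commute_shift hpq hs
  exact hgu n ▸ hX.apply_mem_of_mul_self_eq_zero hgf hg hn

end Chinv

section subU

variable {k : ℕ} {f : V →ₗ[K] V} {u : Fin k → V} {t : Fin k → ℕ} {X : Submodule K V}
  {l : Fin k} {c : ℕ}

lemma cyc_le_subU : cyc f (u l) ≤ subU f u t (t l) :=
  le_biSup (fun i => cyc f (u i)) (rfl : t l = t l)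

lemma pow_apply_mem_of_inf_subU_eq (hX : X ⊓ subU f u t (t l) = (subU f u t (t l)).map (f ^ c)) :
    (f ^ c) (u l) ∈ X := by
  have hmem : (f ^ c) (u l) ∈ X ⊓ subU f u t (t l) :=
    hX ▸ Submodule.mem_map_of_mem (cyc_le_subU (Submodule.subset_span ⟨0, by simp⟩))
  exact hmem.1

lemma le_of_pow_apply_mem (hu : IsGenTuple f u t) (hc : c ≤ t l)
    (hX : X ⊓ subU f u t (t l) = (subU f u t (t l)).map (f ^ c)) {n : ℕ}
    (hn : (f ^ n) (u l) ∈ X) : c ≤ n := by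
  obtain ⟨w, hw, hwu⟩ : (f ^ n) (u l) ∈ (subU f u t (t l)).map (f ^ c) :=
    hX ▸ ⟨hn, cyc_le_subU (pow_apply_mem_cyc f _ n)⟩
  have hzero : (f ^ (t l - c + n)) (u l) = 0 := by
    rw [pow_add, Module.End.mul_apply, ← hwu, ← Module.End.mul_apply, ← pow_add,
      Nat.sub_add_cancel hc]
    exact hu.subU_le_ker_pow _ hw
  by_contra! hlt
  exact (hu.1 l).2 _ (by omega) hzero

end subU

theorem stmt8_general (f : V →ₗ[K] V)
    {k : ℕ} (u : Fin k → V) (t : Fin k → ℕ) (hu : IsGenTuple f u t)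
    (X : Submodule K V) (hX : Chinv f X) (c : ℕ → ℕ)
    (hc : ∀ a ∈ Set.range t, c a ≤ a ∧ X ⊓ subU f u t a = (subU f u t a).map (f ^ c a)) :
    ∀ a ∈ Set.range t, ∀ b ∈ Set.range t, a < b → c a ≤ c b ∧ a - c a ≤ b - c b := by
  rintro _ ⟨p, rfl⟩ _ ⟨q, rfl⟩ hlt
  obtain ⟨hcp, hXp⟩ := hc (t p) ⟨p, rfl⟩
  obtain ⟨hcq, hXq⟩ := hc (t q) ⟨q, rfl⟩
  have hne : p ≠ q := by rintro rfl; exact hlt.false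
  constructor
  · have hq_on_p : (f ^ (t q + 0)) (u p) = 0 :=
      Module.End.pow_map_zero_of_le (by omega) (hu.1 p).1
    exact le_of_pow_apply_mem hu hcp hXp <|
      hX.pow_apply_mem_of_shift hu hne.symm hq_on_p (pow_apply_mem_of_inf_subU_eq hXq)
  · have hp_on_q : (f ^ (t p + (t q - t p))) (u q) = 0 := by
      rw [Nat.add_sub_cancel' hlt.le]; exact (hu.1 q).1
    have hcq_le : c (t q) ≤ c (t p) + (t q - t p) := le_of_pow_apply_mem hu hcq hXq <|
      hX.pow_apply_mem_of_shift hu hne hp_on_q (pow_apply_mem_of_inf_subU_eq hXp)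
    omega

theorem stmt8 [FiniteDimensional K V] (f : V →ₗ[K] V) (hf : IsNilpotent f)
    {k : ℕ} (u : Fin k → V) (t : Fin k → ℕ) (ht : Monotone t) (hu : IsGenTuple f u t)
    (X : Submodule K V) (hX : Chinv f X) (c : ℕ → ℕ)
    (hc : ∀ a ∈ Set.range t, c a ≤ a ∧ X ⊓ subU f u t a = (subU f u t a).map (f ^ c a)) :
    ∀ a ∈ Set.range t, ∀ b ∈ Set.range t, a < b → c a ≤ c b ∧ a - c a ≤ b - c b :=
  stmt8_general f u t hu X hX c hc
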